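/- arXiv:2409.09809 — 2 statements merged into one kernel-verified Lean document; each statement's English description precedes it below -/
import Mathlib

section
/- Let f be a formal power series with f(0) = 0 and f'(0) = q. Then for every natural number s, the first derivative of the s-fold compositional iterate f^s at 0 equals q^s, and the second derivative of f^s at 0 equals a_2 q^{s-1} [s]_q, where a_2 = f''(0) and [s]_q = 1 + q + \cdots + q^{s-1}. -/
/-!
When `g(0) = 0`, the low coefficients of `f ∘ g` are `(f ∘ g)₁ = f₁ g₁` and
`(f ∘ g)₂ = f₁ g₂ + f₂ g₁²`, and they only see the truncations of `f` and `g` to degree `2`.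
Hence the linear coefficients of the iterates are `q^s`, and the quadratic ones satisfy
`c_{s+1} = q c_s + a₂ q^{2s}` with `c_0 = 0`, a recurrence solved by `c_s = a₂ q^{s-1} [s]_q`.
-/

open Finset PowerSeries

namespace PowerSeries

variable {R : Type*} [CommSemiring R]

lemma coeff_zero_trunc_one_comp (f g : R⟦X⟧) :
    ((trunc 1 f).comp (trunc 1 g)).coeff 0 = constantCoeff f := by
  simp [trunc_succ]

lemma coeff_one_trunc_two_comp (f g : R⟦X⟧) (hg : constantCoeff g = 0) :
    ((trunc 2 f).comp (trunc 2 g)).coeff 1 = coeff 1 f * coeff 1 g := by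
  simp [trunc_succ, hg]

lemma trunc_three (f : R⟦X⟧) :
    trunc 3 f = Polynomial.C (constantCoeff f) + Polynomial.C (coeff 1 f) * Polynomial.X
      + Polynomial.C (coeff 2 f) * Polynomial.X ^ 2 := by
  simp [trunc_succ, ← Polynomial.C_mul_X_pow_eq_monomial]

lemma coeff_two_trunc_three_comp (f g : R⟦X⟧) (hg : constantCoeff g = 0) :
    ((trunc 3 f).comp (trunc 3 g)).coeff 2 =
      coeff 1 f * coeff 2 g + coeff 2 f * coeff 1 g ^ 2 := by
  have hcomp : (trunc 3 f).comp (trunc 3 g) =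
      Polynomial.C (constantCoeff f) + Polynomial.C (coeff 1 f * coeff 1 g) * Polynomial.X
        + Polynomial.C (coeff 1 f * coeff 2 g + coeff 2 f * coeff 1 g ^ 2) * Polynomial.X ^ 2
        + Polynomial.X ^ 3 * (Polynomial.C (coeff 2 f * coeff 2 g)
          * (Polynomial.C (2 * coeff 1 g) + Polynomial.C (coeff 2 g) * Polynomial.X)) := by
    simp only [trunc_three, hg, Polynomial.add_comp, Polynomial.mul_comp, Polynomial.pow_comp,
      Polynomial.C_comp, Polynomial.X_comp, map_zero, map_add, map_mul, map_pow, map_ofNat]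
    ring
  rw [hcomp]
  simp only [Polynomial.coeff_add, Polynomial.coeff_C, Polynomial.coeff_C_mul_X,
    Polynomial.coeff_C_mul_X_pow, Polynomial.coeff_X_pow_mul']
  norm_num

end PowerSeries

theorem eq_mul_pow_mul_geom_sum_of_succ {R : Type*} [CommSemiring R] (u : ℕ → R) (q a : R)
    (h0 : u 0 = 0) (hsucc : ∀ t, u (t + 1) = q * u t + a * (q ^ t) ^ 2) (s : ℕ) :
    u s = a * q ^ (s - 1) * ∑ i ∈ range s, q ^ i := by
  induction s with
  | zero => simp [h0]
  | succ t ih =>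
    rcases t with _ | t
    · simp [hsucc, h0]
    · rw [hsucc, ih, sum_range_succ _ (t + 1), Nat.add_sub_cancel, Nat.add_sub_cancel]
      ring

/-- For a formal power series `f` with `f(0) = 0` and `f'(0) = q`, the iterates
`F s = f^{∘s}` (characterized coefficientwise through truncated polynomial
composition) satisfy `(f^s)'(0) = q^s` and `(f^s)''(0) = a₂ q^{s-1} [s]_q`,
where `a₂ = f''(0) = 2·[x²]f`. -/
theorem iterate_first_two_derivs (f : PowerSeries ℂ)
    (hf0 : PowerSeries.constantCoeff f = 0) (q : ℂ)
    (hq : PowerSeries.coeff 1 f = q)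
    (F : ℕ → PowerSeries ℂ) (hF0 : F 0 = PowerSeries.X)
    (hFs : ∀ s n : ℕ, PowerSeries.coeff n (F (s + 1)) =
      ((PowerSeries.trunc (n + 1) f).comp (PowerSeries.trunc (n + 1) (F s))).coeff n)
    (s : ℕ) :
    PowerSeries.coeff 1 (F s) = q ^ s ∧
      2 * PowerSeries.coeff 2 (F s) =
        (2 * PowerSeries.coeff 2 f) * q ^ (s - 1) * ∑ i ∈ Finset.range s, q ^ i := by
  have hconst : ∀ t, constantCoeff (F t) = 0 := by
    rintro (_ | t)
    · simp [hF0]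
    · rw [← coeff_zero_eq_constantCoeff_apply, hFs, coeff_zero_trunc_one_comp, hf0]
  have hlin : ∀ t, coeff 1 (F t) = q ^ t := by
    intro t
    induction t with
    | zero => simp [hF0]
    | succ t ih => rw [hFs, coeff_one_trunc_two_comp _ _ (hconst t), hq, ih, pow_succ']
  have hquad : ∀ t, coeff 2 (F (t + 1)) = q * coeff 2 (F t) + coeff 2 f * (q ^ t) ^ 2 := by
    intro t
    rw [hFs, coeff_two_trunc_three_comp _ _ (hconst t), hq, hlin t]
  refine ⟨hlin s, ?_⟩
  rw [eq_mul_pow_mul_geom_sum_of_succ (fun t ↦ coeff 2 (F t)) q _ (by simp [hF0, coeff_X]) hquad s]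
  ring
end

section
/- For q \ne 1 (and q not a root of unity as needed), the derivative with respect to s at s = 0 of the generalized q-binomial coefficient \binom{s}{p}_q = \prod_{\ell=0}^{p-1} [s - \ell]_q / [p]_q! (with [s]_q = (q^s - 1)/(q - 1), q^s = e^{s \log q}) equals (\log q)/(q-1) \cdot (-1)^{p-1} q^{-\binom{p}{2}} / [p]_q, for p \ge 1. -/
open Finset

/-!
The factor `ℓ = 0` of the numerator `∏_{ℓ<p} [s-ℓ]_q` is `[s]_q`,
which vanishes at `s = 0` with derivative `log q/(q - 1)`; so the derivative of the product at `0`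
is `log q/(q - 1) · ∏_{0<ℓ<p} [-ℓ]_q`. By `[-ℓ]_q = -q^{-ℓ} [ℓ]_q` the remaining product is
`(-1)^{p-1} q^{-C(p,2)} [p-1]_q!`, and dividing by `[p]_q! = [p-1]_q! [p]_q` gives the claim.
-/

theorem sum_range_add_one_eq_choose_two (m : ℕ) : ∑ i ∈ range m, (i + 1) = (m + 1).choose 2 := by
  rw [Nat.choose_two_right, ← sum_range_id, sum_range_succ']
  simp

theorem HasDerivAt.prod_range_succ_of_eq_zero {𝕜 : Type*} [NontriviallyNormedField 𝕜]
    {f : ℕ → 𝕜 → 𝕜} {f₀' x : 𝕜} {m : ℕ} (hf₀ : HasDerivAt (f 0) f₀' x) (hf₀x : f 0 x = 0)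
    (hf : ∀ i ∈ range m, DifferentiableAt 𝕜 (f (i + 1)) x) :
    HasDerivAt (fun s => ∏ i ∈ range (m + 1), f i s) ((∏ i ∈ range m, f (i + 1) x) * f₀') x := by
  simp_rw [prod_range_succ']
  have h := (DifferentiableAt.fun_finsetProd hf).hasDerivAt.mul hf₀
  rwa [hf₀x, mul_zero, zero_add] at h

/-- The `q`-analogue `[s]_q` of a real number `s`. -/
noncomputable def qNumber (q s : ℝ) : ℝ := (q ^ s - 1) / (q - 1)

section qNumber

variable {q : ℝ}

theorem qNumber_zero : qNumber q 0 = 0 := by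
  simp [qNumber]

theorem qNumber_natCast (n : ℕ) : qNumber q n = (q ^ n - 1) / (q - 1) := by
  rw [qNumber, Real.rpow_natCast]

theorem qNumber_natCast_ne_zero (hq0 : 0 < q) (hq1 : q ≠ 1) {n : ℕ} (hn : n ≠ 0) :
    qNumber q n ≠ 0 := by
  rw [qNumber_natCast]
  exact div_ne_zero (sub_ne_zero.mpr ((pow_eq_one_iff_of_nonneg hq0.le hn).not.mpr hq1))
    (sub_ne_zero.mpr hq1)

theorem qNumber_neg (hq0 : 0 < q) (s : ℝ) : qNumber q (-s) = -(q ^ s)⁻¹ * qNumber q s := by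
  have hqs : q ^ s ≠ 0 := (Real.rpow_pos_of_pos hq0 s).ne'
  rw [qNumber, qNumber, Real.rpow_neg hq0.le]
  field_simp
  ring

theorem hasDerivAt_qNumber (hq0 : 0 < q) (s : ℝ) :
    HasDerivAt (qNumber q) (q ^ s * Real.log q / (q - 1)) s :=
  ((Real.hasStrictDerivAt_const_rpow hq0 s).hasDerivAt.sub_const 1).div_const (q - 1)

theorem prod_range_qNumber_neg (hq0 : 0 < q) (m : ℕ) :
    ∏ i ∈ range m, qNumber q (-(i + 1 : ℕ)) =
      (-1) ^ m * q ^ (-((m + 1).choose 2 : ℤ)) * ∏ i ∈ range m, qNumber q (i + 1 : ℕ) := by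
  simp only [qNumber_neg hq0, Real.rpow_natCast, prod_mul_distrib, neg_mul, prod_neg,
    prod_inv_distrib, prod_pow_eq_pow_sum, sum_range_add_one_eq_choose_two, card_range, zpow_neg,
    zpow_natCast]
  ring

theorem hasDerivAt_prod_qNumber_sub (hq0 : 0 < q) (m : ℕ) :
    HasDerivAt (fun s => ∏ ℓ ∈ range (m + 1), qNumber q (s - ℓ))
      ((∏ i ∈ range m, qNumber q (-(i + 1 : ℕ))) * (Real.log q / (q - 1))) 0 := by
  have hf₀ : HasDerivAt (fun s => qNumber q (s - (0 : ℕ))) (Real.log q / (q - 1)) 0 := by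
    simpa using hasDerivAt_qNumber hq0 0
  have hf (ℓ : ℕ) : DifferentiableAt ℝ (fun s => qNumber q (s - ℓ)) 0 :=
    ((hasDerivAt_qNumber hq0 _).comp_sub_const 0 (ℓ : ℝ)).differentiableAt
  simpa only [zero_sub] using HasDerivAt.prod_range_succ_of_eq_zero
    (f := fun ℓ s => qNumber q (s - ℓ)) hf₀ (by simp [qNumber_zero]) fun i _ => hf (i + 1)

end qNumber

/-- For `q > 0`, `q ≠ 1`, the derivative at `s = 0` of the generalized `q`-binomial
coefficient `s ↦ (s choose p)_q = ∏_{ℓ<p} [s-ℓ]_q / [p]_q!` (with `[s]_q = (q^s-1)/(q-1)`)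
equals `(log q)/(q-1) · (-1)^{p-1} q^{-C(p,2)} / [p]_q`, for `p ≥ 1`. -/
theorem deriv_qBinom_at_zero (q : ℝ) (hq0 : 0 < q) (hq1 : q ≠ 1) (p : ℕ) (hp : 1 ≤ p) :
    deriv (fun s : ℝ =>
        (∏ ℓ ∈ Finset.range p, (q ^ (s - (ℓ : ℝ)) - 1) / (q - 1)) /
          ∏ i ∈ Finset.range p, (q ^ (i + 1) - 1) / (q - 1)) 0 =
      Real.log q / (q - 1) *
        ((-1) ^ (p - 1) * q ^ (-(p.choose 2 : ℤ)) / ((q ^ p - 1) / (q - 1))) := by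
  obtain ⟨m, rfl⟩ : ∃ m, p = m + 1 := ⟨p - 1, by omega⟩
  have hfact : ∏ i ∈ range m, qNumber q (i + 1 : ℕ) ≠ 0 :=
    prod_ne_zero_iff.mpr fun i _ => qNumber_natCast_ne_zero hq0 hq1 i.succ_ne_zero
  change deriv (fun s => (∏ ℓ ∈ range (m + 1), qNumber q (s - ℓ)) / _) 0 = _
  rw [((hasDerivAt_prod_qNumber_sub hq0 m).div_const _).deriv, prod_range_qNumber_neg hq0,
    prod_range_succ, Nat.add_sub_cancel]
  simp only [← qNumber_natCast]
  field_simp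
end
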